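/- arXiv:2604.13422 — 2 statements merged into one kernel-verified Lean document; each statement's English description precedes it below -/
import Mathlib

section
/- Let F be a finite set of positive real numbers, C > 0 and 0 < α < 1. Then there is no strictly increasing sequence (ω_p)_{p≥1} of real numbers such that for every p ≥ 1: (i) ω_p ≤ C·p^α, and (ii) ω_p = m·a for some positive integer m and some a ∈ F. -/
/-!
All values `ω 1 < ⋯ < ω P` are positive multiples `m * a` of elements `a ∈ F` not exceeding
`ω P ≤ C * P ^ α`, and there are at most `∑ a ∈ F, ⌊T / a⌋` such multiples below `T`.
Hence `P ≤ (C * ∑ a ∈ F, a⁻¹) * P ^ α` for every `P ≥ 1`, which fails for large `P` as `α < 1`.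
-/

open Finset Filter

noncomputable def Finset.positiveMultiplesLE (F : Finset ℝ) (T : ℝ) : Finset ℝ :=
  F.biUnion fun a => (Icc 1 ⌊T / a⌋₊).image fun m : ℕ => (m : ℝ) * a

lemma Finset.natCast_mul_mem_positiveMultiplesLE {F : Finset ℝ} {T a : ℝ} {m : ℕ}
    (hm : 0 < m) (ha : a ∈ F) (ha₀ : 0 < a) (hT : m * a ≤ T) :
    (m : ℝ) * a ∈ F.positiveMultiplesLE T :=
  mem_biUnion.2 ⟨a, ha, mem_image.2
    ⟨m, mem_Icc.2 ⟨hm, Nat.le_floor ((le_div_iff₀ ha₀).2 hT)⟩, rfl⟩⟩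

lemma Finset.card_positiveMultiplesLE_le {F : Finset ℝ} (hF : ∀ a ∈ F, 0 < a) {T : ℝ}
    (hT : 0 ≤ T) : ((F.positiveMultiplesLE T).card : ℝ) ≤ T * ∑ a ∈ F, a⁻¹ := by
  have hcard : (F.positiveMultiplesLE T).card ≤ ∑ a ∈ F, ⌊T / a⌋₊ :=
    card_biUnion_le.trans <| sum_le_sum fun a _ => card_image_le.trans (by simp)
  calc ((F.positiveMultiplesLE T).card : ℝ) ≤ ∑ a ∈ F, (⌊T / a⌋₊ : ℝ) := by exact_mod_cast hcard
    _ ≤ ∑ a ∈ F, T / a :=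
      sum_le_sum fun a ha => Nat.floor_le (div_nonneg hT (hF a ha).le)
    _ = T * ∑ a ∈ F, a⁻¹ := by simp only [div_eq_mul_inv, mul_sum]

lemma exists_mul_rpow_lt_natCast (K : ℝ) {α : ℝ} (hα : α < 1) :
    ∃ P : ℕ, 1 ≤ P ∧ K * (P : ℝ) ^ α < P := by
  have hgrowth : Tendsto (fun P : ℕ => (P : ℝ) ^ (1 - α)) atTop atTop :=
    (tendsto_rpow_atTop (by linarith)).comp tendsto_natCast_atTop_atTop
  obtain ⟨P, hKP, hP⟩ := ((hgrowth.eventually_gt_atTop K).and (eventually_ge_atTop 1)).exists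
  have hP₀ : (0 : ℝ) < P := by exact_mod_cast hP
  refine ⟨P, hP, ?_⟩
  calc K * (P : ℝ) ^ α < (P : ℝ) ^ (1 - α) * (P : ℝ) ^ α :=
        mul_lt_mul_of_pos_right hKP (Real.rpow_pos_of_pos hP₀ α)
    _ = P := by rw [← Real.rpow_add hP₀, sub_add_cancel, Real.rpow_one]

theorem stmt_0_general (F : Finset ℝ) (hF : ∀ a ∈ F, 0 < a) (C α : ℝ)
    (hα1 : α < 1) :
    ¬ ∃ ω : ℕ → ℝ,
      (∀ p : ℕ, 1 ≤ p → ω p < ω (p + 1)) ∧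
      (∀ p : ℕ, 1 ≤ p →
        ω p ≤ C * (p : ℝ) ^ α ∧ ∃ m : ℕ, 0 < m ∧ ∃ a ∈ F, ω p = m * a) := by
  rintro ⟨ω, hsucc, hω⟩
  have hmono : StrictMonoOn ω (Set.Ici 1) :=
    strictMonoOn_of_lt_add_one Set.ordConnected_Ici fun p _ hp _ => hsucc p hp
  obtain ⟨P, hP, hlt⟩ := exists_mul_rpow_lt_natCast (C * ∑ a ∈ F, a⁻¹) hα1
  obtain ⟨hωP, m, hm, a, ha, hωP_eq⟩ := hω P hP
  have hωP_nonneg : 0 ≤ ω P := hωP_eq ▸ by positivity [hF a ha]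
  have hsub : (Icc 1 P).image ω ⊆ F.positiveMultiplesLE (ω P) := by
    simp only [image_subset_iff, mem_Icc]
    intro p ⟨hp, hpP⟩
    obtain ⟨-, k, hk, b, hb, hωp⟩ := hω p hp
    have hle : ω p ≤ ω P := hmono.monotoneOn hp hP hpP
    rw [hωp] at hle ⊢
    exact natCast_mul_mem_positiveMultiplesLE hk hb (hF b hb) hle
  have hcard : ((Icc 1 P).image ω).card = P := by
    rw [card_image_of_injOn (hmono.injOn.mono fun p hp => (mem_Icc.1 hp).1), Nat.card_Icc,
      Nat.add_sub_cancel]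
  have hP_le : (P : ℝ) ≤ C * (P : ℝ) ^ α * ∑ a ∈ F, a⁻¹ :=
    calc (P : ℝ) ≤ (F.positiveMultiplesLE (ω P)).card := by exact_mod_cast hcard ▸ card_le_card hsub
      _ ≤ ω P * ∑ a ∈ F, a⁻¹ := card_positiveMultiplesLE_le hF hωP_nonneg
      _ ≤ C * (P : ℝ) ^ α * ∑ a ∈ F, a⁻¹ :=
        mul_le_mul_of_nonneg_right hωP (sum_nonneg fun a ha => (inv_pos.2 (hF a ha)).le)
  linarith

theorem stmt_0 (F : Finset ℝ) (hF : ∀ a ∈ F, 0 < a) (C α : ℝ)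
    (hC : 0 < C) (hα0 : 0 < α) (hα1 : α < 1) :
    ¬ ∃ ω : ℕ → ℝ,
      (∀ p : ℕ, 1 ≤ p → ω p < ω (p + 1)) ∧
      (∀ p : ℕ, 1 ≤ p →
        ω p ≤ C * (p : ℝ) ^ α ∧ ∃ m : ℕ, 0 < m ∧ ∃ a ∈ F, ω p = m * a) :=
  stmt_0_general F hF C α hα1
end

section
/- Let A > 0, C > 0, 0 < α < 1, and let F be a finite set of real numbers each strictly greater than A. Then there is no sequence (ω_p)_{p≥1} of real numbers such that for all p ≥ 1: (i) ω_{p+1} ≥ ω_p + A, (ii) ω_p ≤ p·A + C·p^α, and (iii) ω_p = m·a for some positive integer m and some a ∈ F. -/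
open Filter


private lemma aux_crt (pf : Finset ℕ) (hpf : ∀ p ∈ pf, p.Prime) (r : ℕ → ℤ) :
    ∃ c : ℤ, ∀ m : ℤ, ∀ p ∈ pf, ¬ ((p : ℤ) ∣ (c + ((∏ q ∈ pf, q : ℕ) : ℤ) * m - r p)) := by
  classical
  induction pf using Finset.induction_on with
  | empty => exact ⟨0, by simp⟩
  | @insert p₀ s hp₀s ih =>
    obtain ⟨c', hc'⟩ := ih (fun p hp => hpf p (Finset.mem_insert_of_mem hp))
    have hp₀ : p₀.Prime := hpf p₀ (Finset.mem_insert_self _ _)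
    have hp₀Z : Prime (p₀ : ℤ) := Nat.prime_iff_prime_int.mp hp₀
    have hprod : ((∏ q ∈ insert p₀ s, q : ℕ) : ℤ) = (p₀ : ℤ) * ((∏ q ∈ s, q : ℕ) : ℤ) := by
      rw [Finset.prod_insert hp₀s]; push_cast; ring
    have hnotdvdprod : ¬ ((p₀ : ℤ) ∣ ((∏ q ∈ s, q : ℕ) : ℤ)) := by
      intro hdv
      have : p₀ ∣ ∏ q ∈ s, q := by exact_mod_cast hdv
      obtain ⟨q, hq, hdq⟩ := (Nat.Prime.prime hp₀).dvd_finset_prod_iff _ |>.mp this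
      have : p₀ = q := (Nat.prime_dvd_prime_iff_eq hp₀ (hpf q (Finset.mem_insert_of_mem hq))).mp hdq
      exact hp₀s (this ▸ hq)
    by_cases hd : (p₀ : ℤ) ∣ (c' - r p₀)
    · refine ⟨c' + ((∏ q ∈ s, q : ℕ) : ℤ), fun m p hp => ?_⟩
      rcases Finset.mem_insert.mp hp with rfl | hps
      · rw [hprod]
        intro hdvd
        have h2 : (p : ℤ) ∣ ((∏ q ∈ s, q : ℕ) : ℤ) * (1 + p * m) := by
          have := dvd_sub hdvd hd
          have heq : c' + ((∏ q ∈ s, q : ℕ) : ℤ) + (p : ℤ) * ((∏ q ∈ s, q : ℕ) : ℤ) * m - r p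
              - (c' - r p) = ((∏ q ∈ s, q : ℕ) : ℤ) * (1 + p * m) := by ring
          rwa [heq] at this
        rcases hp₀Z.dvd_mul.mp h2 with h3 | h3
        · exact hnotdvdprod h3
        · have h4 : (p : ℤ) ∣ 1 := by
            have := dvd_sub h3 (Dvd.intro m rfl)
            simpa using this
          exact hp₀Z.not_dvd_one h4
      · rw [hprod]
        intro hdvd
        refine hc' (1 + (p₀ : ℤ) * m) p hps ?_
        have heq : c' + ((∏ q ∈ s, q : ℕ) : ℤ) + (p₀ : ℤ) * ((∏ q ∈ s, q : ℕ) : ℤ) * m - r p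
            = c' + ((∏ q ∈ s, q : ℕ) : ℤ) * (1 + (p₀ : ℤ) * m) - r p := by ring
        rwa [heq] at hdvd
    · refine ⟨c', fun m p hp => ?_⟩
      rcases Finset.mem_insert.mp hp with rfl | hps
      · rw [hprod]
        intro hdvd
        refine hd ?_
        have heq : c' - r p = (c' + (p:ℤ) * ((∏ q ∈ s, q : ℕ) : ℤ) * m - r p) - (p:ℤ) * (((∏ q ∈ s, q : ℕ) : ℤ) * m) := by ring
        rw [heq]
        exact dvd_sub hdvd ⟨((∏ q ∈ s, q : ℕ) : ℤ) * m, rfl⟩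
      · rw [hprod]
        intro hdvd
        refine hc' ((p₀ : ℤ) * m) p hps ?_
        have heq : c' + ((∏ q ∈ s, q : ℕ) : ℤ) * ((p₀:ℤ) * m) - r p
            = c' + (p₀ : ℤ) * ((∏ q ∈ s, q : ℕ) : ℤ) * m - r p := by ring
        rw [heq]
        exact hdvd


private lemma aux_badclass (p : ℕ) (hp : p.Prime) (X : ℤ) (J : ℕ) (hJ : J ≠ 0) :
    ∃ r : ℤ, ∀ t : ℤ, ¬ ((p : ℤ) ∣ (t - r)) →
      ¬ ((p : ℤ) ^ (J.factorization p + 1) ∣ X + t * (J : ℤ)) := by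
  have hpZ : Prime (p : ℤ) := Nat.prime_iff_prime_int.mp hp
  by_cases h : ∃ t₀ : ℤ, (p : ℤ) ^ (J.factorization p + 1) ∣ X + t₀ * (J : ℤ)
  · obtain ⟨t₀, ht₀⟩ := h
    refine ⟨t₀, fun t hnd hdvd => hnd ?_⟩
    set b := J.factorization p with hb
    have hJfac : p ^ b * (J / p ^ b) = J := Nat.ordProj_mul_ordCompl_eq_self J p
    have hndc : ¬ (p ∣ J / p ^ b) := Nat.not_dvd_ordCompl hp hJ
    have h1 : (p : ℤ) ^ (b + 1) ∣ (t - t₀) * (J : ℤ) := by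
      have := dvd_sub hdvd ht₀
      have heq : X + t * (J:ℤ) - (X + t₀ * (J:ℤ)) = (t - t₀) * (J:ℤ) := by ring
      rwa [heq] at this
    have h2 : (p : ℤ) ^ b * ((p:ℤ) * ((t - t₀) * ((J / p ^ b : ℕ) : ℤ))) = (p:ℤ) * ((t - t₀) * (J : ℤ)) := by
      have : ((p : ℤ)) ^ b * ((J / p ^ b : ℕ) : ℤ) = (J : ℤ) := by exact_mod_cast congrArg (Nat.cast : ℕ → ℤ) hJfac
      rw [← this]; ring
    have h3 : (p : ℤ) ^ b * (p : ℤ) ∣ (p : ℤ) ^ b * ((t - t₀) * ((J / p ^ b : ℕ) : ℤ)) := by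
      have hdd : (p : ℤ) ^ (b+1) ∣ (p:ℤ)^b * ((t - t₀) * ((J / p ^ b : ℕ) : ℤ)) := by
        refine Dvd.dvd.trans h1 ?_
        have : (p:ℤ)^b * ((t - t₀) * ((J / p ^ b : ℕ) : ℤ)) = (t - t₀) * ((p:ℤ)^b * ((J / p ^ b : ℕ) : ℤ)) := by ring
        rw [this]
        have hcast : ((p : ℤ)) ^ b * ((J / p ^ b : ℕ) : ℤ) = (J : ℤ) := by exact_mod_cast congrArg (Nat.cast : ℕ → ℤ) hJfac
        rw [hcast]
      rwa [pow_succ] at hdd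
    have h4 : (p : ℤ) ∣ (t - t₀) * ((J / p ^ b : ℕ) : ℤ) := by
      have hpb : ((p : ℤ) ^ b) ≠ 0 := pow_ne_zero _ (by exact_mod_cast hp.ne_zero)
      exact (mul_dvd_mul_iff_left hpb).mp h3
    rcases hpZ.dvd_mul.mp h4 with h5 | h5
    · exact h5
    · exact absurd (by exact_mod_cast h5) hndc
  · exact ⟨0, fun t _ hdvd => h ⟨t, hdvd⟩⟩

private lemma aux_nt (J : ℕ) (hJ : 0 < J) (us : Finset ℕ) (hus : ∀ v ∈ us, J < v) :
    ∃ M : ℕ, 0 < M ∧ ∀ X : ℤ, ∃ c : ℕ, c < M ∧ ∀ t : ℕ, t % M = c % M →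
      ∀ v ∈ us, ¬ ((v : ℤ) ∣ X + (t : ℤ) * (J : ℤ)) := by
  classical
  set U : ℕ := us.lcm id with hU
  have hU0 : U ≠ 0 := by
    intro h0
    rw [hU, Finset.lcm_eq_zero_iff] at h0
    obtain ⟨v, hv, hv0⟩ := h0
    exact absurd (hv0 ▸ hus v hv : J < (0:ℕ)) (by omega)
  set pf : Finset ℕ := U.primeFactors with hpf
  have hpfprime : ∀ p ∈ pf, p.Prime := fun p hp => Nat.prime_of_mem_primeFactors hp
  set M : ℕ := ∏ q ∈ pf, q with hM
  have hM0 : 0 < M := Finset.prod_pos (fun p hp => (hpfprime p hp).pos)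
  refine ⟨M, hM0, fun X => ?_⟩
  -- bad classes
  have hbad : ∀ p : ℕ, ∃ r : ℤ, p.Prime → (∀ t : ℤ, ¬ ((p : ℤ) ∣ (t - r)) →
      ¬ ((p : ℤ) ^ (J.factorization p + 1) ∣ X + t * (J : ℤ))) := by
    intro p
    by_cases hp : p.Prime
    · obtain ⟨r, hr⟩ := aux_badclass p hp X J hJ.ne'
      exact ⟨r, fun _ => hr⟩
    · exact ⟨0, fun h => absurd h hp⟩
  choose r hr using hbad
  obtain ⟨c', hc'⟩ := aux_crt pf hpfprime r
  refine ⟨(c'.emod M).toNat, ?_, ?_⟩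
  · have h1 : c'.emod M < (M : ℤ) := Int.emod_lt_of_pos c' (by exact_mod_cast hM0)
    have h2 : 0 ≤ c'.emod M := Int.emod_nonneg c' (by exact_mod_cast hM0.ne')
    omega
  · intro t ht v hv hdvd
    -- t ≡ c' mod M in ℤ
    have hcc : ((c'.emod M).toNat : ℤ) = c'.emod M :=
      Int.toNat_of_nonneg (Int.emod_nonneg c' (by exact_mod_cast hM0.ne'))
    have htc : (M : ℤ) ∣ (t : ℤ) - c' := by
      have hmod : Nat.ModEq M ((c'.emod M).toNat) t := ht.symm
      have h1 : (M : ℤ) ∣ (t : ℤ) - ((c'.emod M).toNat : ℤ) := hmod.dvd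
      have h2 : (M : ℤ) ∣ ((c'.emod M).toNat : ℤ) - c' := by
        rw [hcc]
        exact ⟨-(c' / (M:ℤ)), by linear_combination Int.mul_ediv_add_emod c' (M:ℤ)⟩
      have := dvd_add h1 h2
      rwa [sub_add_sub_cancel] at this
    obtain ⟨z, hz⟩ := htc
    -- v has a prime p with factorization exceeding J's
    have hv0 : v ≠ 0 := by have := hus v hv; omega
    have hvJ : ¬ (v ∣ J) := fun hd => absurd (Nat.le_of_dvd hJ hd) (by have := hus v hv; omega)
    have hnle : ¬ (v.factorization ≤ J.factorization) := by
      intro hle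
      exact hvJ ((Nat.factorization_le_iff_dvd hv0 hJ.ne').mp hle)
    obtain ⟨p, hp⟩ : ∃ p, J.factorization p < v.factorization p := by
      by_contra hcon
      push_neg at hcon
      exact hnle (fun p => hcon p)
    have hppf : p ∈ v.primeFactors := by
      rw [← Nat.support_factorization]
      exact Finsupp.mem_support_iff.mpr (by omega)
    have hpprime : p.Prime := Nat.prime_of_mem_primeFactors hppf
    have hpinpf : p ∈ pf := by
      rw [hpf]
      exact Nat.primeFactors_mono (Finset.dvd_lcm hv) hU0 hppf
    -- p^(b+1) divides v hence X + tJ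
    have hpow : (p : ℤ) ^ (J.factorization p + 1) ∣ (v : ℤ) := by
      have h1 : p ^ (J.factorization p + 1) ∣ p ^ (v.factorization p) :=
        pow_dvd_pow p (by omega)
      have h2 : p ^ (v.factorization p) ∣ v := Nat.ordProj_dvd v p
      exact_mod_cast h1.trans h2
    have hbig : (p : ℤ) ^ (J.factorization p + 1) ∣ X + (t:ℤ) * (J:ℤ) := hpow.trans hdvd
    -- but t avoids the bad class mod p
    refine hr p hpprime (t : ℤ) ?_ hbig
    intro hpd
    refine hc' z p hpinpf ?_
    have hMcast : ((∏ q ∈ pf, q : ℕ) : ℤ) = (M : ℤ) := by rw [hM]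
    rw [hMcast]
    have : c' + (M:ℤ) * z - r p = (t : ℤ) - r p := by linear_combination -hz
    rw [this]
    exact hpd

set_option maxHeartbeats 2000000 in
theorem stmt_3 (A C α : ℝ) (hA : 0 < A) (hC : 0 < C)
    (hα0 : 0 < α) (hα1 : α < 1)
    (F : Finset ℝ) (hF : ∀ a ∈ F, A < a) :
    ¬ ∃ ω : ℕ → ℝ, ∀ p : ℕ, 1 ≤ p →
      (ω p + A ≤ ω (p + 1)) ∧
      (ω p ≤ (p : ℝ) * A + C * (p : ℝ) ^ α) ∧
      (∃ m : ℕ, 0 < m ∧ ∃ a ∈ F, ω p = m * a) := by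
  classical
  rintro ⟨ω, hω⟩
  -- telescoping lower bound
  have hstep : ∀ p : ℕ, 1 ≤ p → ∀ n : ℕ, ω p + n * A ≤ ω (p + n) := by
    intro p hp n
    induction n with
    | zero => simp
    | succ n ih =>
      have key := (hω (p + n) (by omega)).1
      have h2 : p + (n + 1) = (p + n) + 1 := by omega
      rw [h2]
      push_cast
      push_cast at ih
      linarith
  have hω1 : A < ω 1 := by
    obtain ⟨m, hm, a, haF, heq⟩ := (hω 1 le_rfl).2.2
    have h1 : A < a := hF a haF
    have h2 : (1:ℝ) ≤ (m:ℝ) := by exact_mod_cast hm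
    nlinarith
  -- rational structure
  set Fcom : Finset ℝ := F.filter (fun a => ∃ cq : ℚ, 1 < cq ∧ a = (cq : ℝ) * A) with hFcom
  obtain ⟨J, u, hJ0, hufacts⟩ :
      ∃ (J : ℕ) (u : ℝ → ℕ), 0 < J ∧ ∀ a ∈ Fcom,
        J < u a ∧ ∃ r : ℝ, a = r * A ∧ ((u a : ℝ)) = r * (J : ℝ) := by
    set cfun : ℝ → ℚ := fun a =>
      if h : ∃ cq : ℚ, 1 < cq ∧ a = (cq : ℝ) * A then h.choose else 2 with hcfun
    set J : ℕ := Fcom.lcm (fun a => (cfun a).den) with hJdef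
    have hJ0 : 0 < J := by
      rcases Nat.eq_zero_or_pos J with h0 | h
      · exfalso
        rw [hJdef, Finset.lcm_eq_zero_iff] at h0
        obtain ⟨a, _, h0⟩ := h0
        exact (cfun a).den_nz h0
      · exact h
    refine ⟨J, fun a => ((cfun a).num * ((J / (cfun a).den : ℕ) : ℤ)).toNat, hJ0, ?_⟩
    intro a haFcom
    obtain ⟨haF', hPa⟩ := Finset.mem_filter.mp haFcom
    have hc : 1 < cfun a ∧ a = ((cfun a : ℚ) : ℝ) * A := by
      rw [hcfun]
      simp only
      rw [dif_pos hPa]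
      exact hPa.choose_spec
    have hden : (cfun a).den ∣ J := by
      rw [hJdef]
      exact Finset.dvd_lcm haFcom
    have hde : (cfun a).den * (J / (cfun a).den) = J := Nat.mul_div_cancel' hden
    have hqden : (cfun a) * ((cfun a).den : ℚ) = ((cfun a).num : ℚ) := by
      have hdne : ((cfun a).den : ℚ) ≠ 0 := by exact_mod_cast (cfun a).den_nz
      have h := Rat.num_div_den (cfun a)
      rw [div_eq_iff hdne] at h
      linarith [h]
    have hkey : (((cfun a).num * ((J / (cfun a).den : ℕ) : ℤ) : ℤ) : ℚ) = cfun a * (J : ℚ) := by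
      push_cast
      calc ((cfun a).num : ℚ) * ((J / (cfun a).den : ℕ) : ℚ)
          = (cfun a * ((cfun a).den : ℚ)) * ((J / (cfun a).den : ℕ) : ℚ) := by rw [hqden]
        _ = cfun a * ((((cfun a).den * (J / (cfun a).den) : ℕ)) : ℚ) := by push_cast; ring
        _ = cfun a * (J : ℚ) := by rw [hde]
    have hnumpos : 0 < (cfun a).num := Rat.num_pos.mpr (by linarith [hc.1])
    have hznn : 0 ≤ (cfun a).num * ((J / (cfun a).den : ℕ) : ℤ) :=
      mul_nonneg hnumpos.le (Int.natCast_nonneg _)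
    have hucast : ((((cfun a).num * ((J / (cfun a).den : ℕ) : ℤ)).toNat : ℕ) : ℤ)
        = (cfun a).num * ((J / (cfun a).den : ℕ) : ℤ) := Int.toNat_of_nonneg hznn
    have huQ : ((((cfun a).num * ((J / (cfun a).den : ℕ) : ℤ)).toNat : ℕ) : ℚ) = cfun a * (J : ℚ) := by
      rw [← hkey]
      exact_mod_cast congrArg (fun z : ℤ => (z : ℚ)) hucast
    have huJ : J < (((cfun a).num * ((J / (cfun a).den : ℕ) : ℤ)).toNat : ℕ) := by
      have hJQ : (0:ℚ) < (J:ℚ) := by exact_mod_cast hJ0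
      have h1 : (J : ℚ) < ((((cfun a).num * ((J / (cfun a).den : ℕ) : ℤ)).toNat : ℕ) : ℚ) := by
        rw [huQ]
        nlinarith [hc.1]
      exact_mod_cast h1
    refine ⟨huJ, ((cfun a : ℚ) : ℝ), hc.2, ?_⟩
    have := congrArg (fun z : ℚ => (z : ℝ)) huQ
    push_cast at this
    exact_mod_cast this
  set us : Finset ℕ := Fcom.image u with hus
  have husJ : ∀ v ∈ us, J < v := by
    intro v hv
    obtain ⟨a, ha, rfl⟩ := Finset.mem_image.mp hv
    exact (hufacts a ha).1
  obtain ⟨M, hM0, hNTX⟩ := aux_nt J hJ0 us husJ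
  set k : ℕ := F.card with hk
  obtain ⟨T, hT⟩ : ∃ T : ℕ, T = M * (k + 2) := ⟨_, rfl⟩
  have hT1 : k + 2 ≤ T := by
    rw [hT]
    exact Nat.le_mul_of_pos_left (k+2) hM0
  -- epsilon
  obtain ⟨ε, hεpos, hεA2J, hεA, hexact⟩ :
      ∃ ε : ℝ, 0 < ε ∧ ε < A / (J:ℝ) ∧ ε < A ∧ ∀ (t g : ℕ) (a : ℝ), a ∈ F → t < 2*T+3 → g < T+1 →
        |(t:ℝ) * a - (g:ℝ) * A| ≤ ε → (t:ℝ) * a = (g:ℝ) * A := by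
    classical
    set V : Finset ℝ := ((Finset.range (2*T+3) ×ˢ (Finset.range (T+1) ×ˢ F)).image
        (fun x => |(x.1 : ℝ) * x.2.2 - (x.2.1 : ℝ) * A|)).filter (fun v => 0 < v) with hV
    set W : Finset ℝ := insert (A / (2 * J)) V with hW
    have hWne : W.Nonempty := ⟨_, Finset.mem_insert_self _ _⟩
    have hJR : (0:ℝ) < (J:ℝ) := by exact_mod_cast hJ0
    have hWpos : ∀ w ∈ W, 0 < w := by
      intro w hw
      rcases Finset.mem_insert.mp hw with rfl | hw
      · positivity
      · exact (Finset.mem_filter.mp hw).2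
    have hminpos : 0 < W.min' hWne := hWpos _ (W.min'_mem hWne)
    refine ⟨W.min' hWne / 2, by linarith, ?_, ?_, ?_⟩
    · have h1 : W.min' hWne ≤ A / (2*(J:ℝ)) := Finset.min'_le _ _ (Finset.mem_insert_self _ _)
      have h4 : A/(2*(J:ℝ))/2 < A/(J:ℝ) := by
        rw [div_div]
        exact div_lt_div_of_pos_left hA hJR (by nlinarith [hJR])
      linarith
    · have h1 : W.min' hWne ≤ A / (2*(J:ℝ)) := Finset.min'_le _ _ (Finset.mem_insert_self _ _)
      have h2 : A / (2*(J:ℝ)) ≤ A := by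
        rw [div_le_iff₀ (by positivity)]
        nlinarith [(by exact_mod_cast hJ0 : (1:ℝ) ≤ (J:ℝ))]
      linarith
    · intro t g a haF ht hg habs
      by_contra hne
      have hmem : |(t:ℝ) * a - (g:ℝ) * A| ∈ V := by
        rw [hV]
        refine Finset.mem_filter.mpr ⟨Finset.mem_image.mpr ⟨(t, g, a), ?_, rfl⟩, ?_⟩
        · exact Finset.mem_product.mpr ⟨Finset.mem_range.mpr ht,
            Finset.mem_product.mpr ⟨Finset.mem_range.mpr hg, haF⟩⟩
        · exact abs_pos.mpr (sub_ne_zero.mpr hne)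
      have h1 : W.min' hWne ≤ |(t:ℝ)*a - (g:ℝ)*A| :=
        Finset.min'_le _ _ (Finset.mem_insert_of_mem hmem)
      linarith
  have hJR : (0:ℝ) < (J:ℝ) := by exact_mod_cast hJ0
  -- window
  have hwin : ∃ Q : ℕ, 1 ≤ Q ∧ ω (Q + T) - ω Q - T * A ≤ ε := by
    by_contra hcon
    push_neg at hcon
    have hgrow : ∀ n : ℕ, ω 1 + n * ((T:ℝ) * A + ε) ≤ ω (1 + n * T) := by
      intro n
      induction n with
      | zero => simp
      | succ n ih =>
        have h1 := hcon (1 + n*T) (by omega)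
        have h2 : 1 + (n+1) * T = (1 + n*T) + T := by ring
        rw [h2]
        push_cast
        push_cast at ih
        linarith
    have h1α : (0:ℝ) < 1 - α := by linarith
    have hT0 : (1:ℝ) ≤ (T:ℝ) := by exact_mod_cast (by omega : 1 ≤ T)
    obtain ⟨n₀, hn₀⟩ := Filter.eventually_atTop.mp
      (Filter.Tendsto.eventually_ge_atTop
        ((tendsto_rpow_atTop h1α).comp tendsto_natCast_atTop_atTop)
        (C * (2*(T:ℝ))^α / ε + 1))
    set n : ℕ := max 1 n₀ with hn
    have hn1 : 1 ≤ n := le_max_left _ _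
    have hN1 : (1:ℝ) ≤ (n:ℝ) := by exact_mod_cast hn1
    have hNB : C * (2*(T:ℝ))^α / ε + 1 ≤ (n:ℝ)^(1-α) := by
      have := hn₀ n (le_max_right _ _)
      simpa [Function.comp] using this
    have hub := (hω (1 + n*T) (by omega)).2.1
    have hlow := hgrow n
    have hcast : ((1 + n*T : ℕ) : ℝ) = 1 + (n:ℝ) * T := by push_cast; ring
    rw [hcast] at hub
    have hkey : (n:ℝ) * ε ≤ C * (1 + (n:ℝ)*T)^α := by nlinarith [hω1]
    have hb1 : (1:ℝ) + n*T ≤ 2*T*n := by nlinarith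
    have hb2 : ((1:ℝ) + (n:ℝ)*T)^α ≤ (2*(T:ℝ)*n)^α :=
      Real.rpow_le_rpow (by positivity) hb1 hα0.le
    have hb3 : ((2*(T:ℝ))*(n:ℝ))^α = (2*(T:ℝ))^α * (n:ℝ)^α :=
      Real.mul_rpow (by positivity) (by positivity)
    have hb4 : (n:ℝ)^(1-α) * (n:ℝ)^α = (n:ℝ) := by
      rw [← Real.rpow_add (by linarith : (0:ℝ) < (n:ℝ))]
      norm_num
    have hnapos : (0:ℝ) < (n:ℝ)^α := Real.rpow_pos_of_pos (by linarith) α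
    have hb5 : C * (2*(T:ℝ))^α < ε * (n:ℝ)^(1-α) := by
      have h3 : C * (2*(T:ℝ))^α / ε < (n:ℝ)^(1-α) := by linarith
      rw [div_lt_iff₀ hεpos] at h3
      linarith
    have h6 : C * ((1:ℝ) + (n:ℝ)*T)^α ≤ C * (2*(T:ℝ))^α * (n:ℝ)^α := by
      rw [mul_assoc, ← hb3]
      have : (2*(T:ℝ))*(n:ℝ) = 2*(T:ℝ)*n := by ring
      rw [this]
      exact mul_le_mul_of_nonneg_left hb2 hC.le
    have h7 : C * (2*(T:ℝ))^α * (n:ℝ)^α < (ε * (n:ℝ)^(1-α)) * (n:ℝ)^α :=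
      mul_lt_mul_of_pos_right hb5 hnapos
    have h8 : (ε * (n:ℝ)^(1-α)) * (n:ℝ)^α = ε * n := by rw [mul_assoc, hb4]
    linarith
  obtain ⟨Q, hQ1, hQw⟩ := hwin
  -- choose letters
  have hall : ∀ q : ℕ, ∃ m : ℕ, 0 < m ∧ ∃ a, a ∈ F ∧ ω (Q + q) = m * a := by
    intro q
    obtain ⟨m, hm, a, ha, he⟩ := (hω (Q+q) (by omega)).2.2
    exact ⟨m, hm, a, ha, he⟩
  choose msq hmpos rest using hall
  choose aa haaF heqq using rest
  -- eta facts
  have hη0 : ∀ q : ℕ, 0 ≤ ω (Q + q) - ω Q - q * A := by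
    intro q
    have := hstep Q hQ1 q
    linarith
  have hηε : ∀ q : ℕ, q ≤ T → ω (Q + q) - ω Q - q * A ≤ ε := by
    intro q hq
    have h1 := hstep (Q + q) (by omega) (T - q)
    have h2 : (Q + q) + (T - q) = Q + T := by omega
    rw [h2] at h1
    have h3 : ((T - q : ℕ) : ℝ) = (T:ℝ) - q := by
      push_cast [hq]
      ring
    rw [h3] at h1
    linarith
  -- same letter twice implies commensurable
  have hsame : ∀ q q' : ℕ, q < q' → q' ≤ T → aa q = aa q' →
      ∃ cq : ℚ, 1 < cq ∧ aa q = (cq : ℝ) * A := by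
    intro q q' hlt hq'T haeq
    have haF' : aa q ∈ F := haaF q
    have haA : A < aa q := hF _ haF'
    have he1 : ω (Q + q) = msq q * aa q := heqq q
    have he2 : ω (Q + q') = msq q' * aa q := by rw [heqq q', ← haeq]
    have hgR : ((q' - q : ℕ):ℝ) = (q':ℝ) - q := by
      push_cast [hlt.le]
      ring
    have hδlo : -(ε:ℝ) ≤ (ω (Q+q') - ω (Q+q)) - ((q':ℝ) - q) * A := by
      have := hη0 q'
      have := hηε q (by omega)
      linarith
    have hδhi : (ω (Q+q') - ω (Q+q)) - ((q':ℝ) - q) * A ≤ ε := by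
      have := hη0 q
      have := hηε q' hq'T
      linarith
    have hq1R : (1:ℝ) ≤ (q':ℝ) - q := by
      have : (q:ℝ) + 1 ≤ (q':ℝ) := by exact_mod_cast hlt
      linarith
    have hmlt : msq q < msq q' := by
      have hqA : A*1 ≤ A*((q':ℝ)-q) := mul_le_mul_of_nonneg_left hq1R hA.le
      have h1 : (msq q :ℝ) * aa q < (msq q' :ℝ) * aa q := by
        linarith [he1, he2, hδlo, hεA, hqA]
      have h2 : (msq q :ℝ) < (msq q' :ℝ) :=
        lt_of_mul_lt_mul_right (by linarith) (by linarith : (0:ℝ) ≤ aa q)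
      exact_mod_cast h2
    set t : ℕ := msq q' - msq q with htdef
    set g : ℕ := q' - q with hgdef
    have htR : (t:ℝ) = (msq q' : ℝ) - msq q := by
      rw [htdef, Nat.cast_sub hmlt.le]
    have habs : |(t:ℝ) * aa q - (g:ℝ) * A| ≤ ε := by
      have hrw : (t:ℝ) * aa q - (g:ℝ) * A = (ω (Q+q') - ω (Q+q)) - ((q':ℝ) - q) * A := by
        rw [htR, hgdef, hgR, he1, he2]
        ring
      rw [hrw, abs_le]
      exact ⟨hδlo, hδhi⟩
    have htpos : 1 ≤ t := by omega
    have htRpos : (1:ℝ) ≤ (t:ℝ) := by exact_mod_cast htpos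
    have hgT : g ≤ T := by omega
    have hgRT : (g:ℝ) ≤ (T:ℝ) := by exact_mod_cast hgT
    have htb : t < 2*T+3 := by
      have h1 : (t:ℝ) * aa q ≤ (g:ℝ)*A + ε := by
        have := abs_le.mp habs
        linarith [this.2]
      have h2 : (t:ℝ) * A ≤ (t:ℝ) * aa q :=
        mul_le_mul_of_nonneg_left haA.le (by positivity)
      have hgA : (g:ℝ)*A ≤ (T:ℝ)*A := mul_le_mul_of_nonneg_right hgRT hA.le
      have h3 : (t:ℝ) * A ≤ ((T:ℝ) + 1) * A := by linarith [h1, h2, hgA, hεA]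
      have h4 : (t:ℝ) ≤ (T:ℝ) + 1 := le_of_mul_le_mul_right h3 hA
      have h5 : (t:ℝ) ≤ ((T + 1 : ℕ):ℝ) := by push_cast; linarith
      have : t ≤ T + 1 := by exact_mod_cast h5
      omega
    have hexq := hexact t g (aa q) haF' htb (by omega) habs
    have hgt : t < g := by
      have h1 : (t:ℝ) * A < (t:ℝ) * aa q :=
        mul_lt_mul_of_pos_left haA (by linarith)
      rw [hexq] at h1
      have h2 : (t:ℝ) < (g:ℝ) := lt_of_mul_lt_mul_right h1 hA.le
      exact_mod_cast h2
    refine ⟨(g : ℚ) / (t : ℚ), ?_, ?_⟩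
    · rw [lt_div_iff₀ (by exact_mod_cast htpos : (0:ℚ) < (t:ℚ)), one_mul]
      exact_mod_cast hgt
    · have htne : (t:ℝ) ≠ 0 := by linarith
      push_cast
      rw [div_mul_eq_mul_div, eq_div_iff htne]
      linarith [hexq]
  -- non-commensurable count
  set NC : Finset ℕ := (Finset.range (T+1)).filter
      (fun q => ¬ ∃ cq : ℚ, 1 < cq ∧ aa q = (cq : ℝ) * A) with hNC
  have hNCcard : NC.card ≤ k := by
    rw [hk]
    refine Finset.card_le_card_of_injOn aa (fun q hq => haaF q) ?_
    intro q hq q' hq' heq'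
    by_contra hne
    obtain ⟨hqr, hqP⟩ := Finset.mem_filter.mp (Finset.mem_coe.mp hq)
    obtain ⟨hqr', hqP'⟩ := Finset.mem_filter.mp (Finset.mem_coe.mp hq')
    rw [Finset.mem_range] at hqr hqr'
    rcases Nat.lt_trichotomy q q' with hlt | heqv | hgt
    · exact hqP (hsame q q' hlt (by omega) heq')
    · exact hne heqv
    · exact hqP' (hsame q' q hgt (by omega) heq'.symm)
  by_cases hB : ∃ qh, qh ≤ T ∧ ∃ cq : ℚ, 1 < cq ∧ aa qh = (cq : ℝ) * A
  · obtain ⟨qh, hqhT, hqhP⟩ := hB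
    -- the integer X
    have hreal : ∀ q : ℕ, q ≤ T → (∃ cq : ℚ, 1 < cq ∧ aa q = (cq : ℝ) * A) →
        (((msq q : ℤ) * (u (aa q)) - (q:ℤ) * J : ℤ) : ℝ) * (A / J) = ω (Q + q) - q * A := by
      intro q hq hP
      have hmem : aa q ∈ Fcom := Finset.mem_filter.mpr ⟨haaF q, hP⟩
      obtain ⟨huJ, r, hca, huR⟩ := hufacts _ hmem
      rw [heqq q]
      push_cast
      rw [huR, hca]
      field_simp
    obtain ⟨X, hX⟩ : ∃ X : ℤ, X = (msq qh : ℤ) * (u (aa qh)) - (qh : ℤ) * J := ⟨_, rfl⟩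
    have hXq : ∀ q : ℕ, q ≤ T → (∃ cq : ℚ, 1 < cq ∧ aa q = (cq : ℝ) * A) →
        (msq q : ℤ) * (u (aa q)) - (q:ℤ) * J = X := by
      intro q hq hP
      have h1 := hreal q hq hP
      have h2 := hreal qh hqhT hqhP
      obtain ⟨z, hzdef⟩ : ∃ z : ℤ, z = (msq q : ℤ) * (u (aa q)) - (q:ℤ) * J := ⟨_, rfl⟩
      rw [← hzdef] at h1
      rw [← hX] at h2
      have hAJ : (0:ℝ) < A / J := by positivity
      have hsub : ((z - X : ℤ) : ℝ) * (A / J) = (ω (Q+q) - q*A) - (ω (Q+qh) - qh*A) := by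
        push_cast
        linear_combination h1 - h2
      have habs : |((z - X : ℤ) : ℝ)| * (A/J) ≤ ε := by
        rw [← abs_of_pos hAJ, ← abs_mul, hsub]
        have e1 := hη0 q
        have e2 := hη0 qh
        have e3 := hηε q hq
        have e4 := hηε qh hqhT
        rw [abs_le]
        constructor <;> linarith
      have hlt1 : |((z - X : ℤ) : ℝ)| < 1 := by
        by_contra hge
        push_neg at hge
        have h5 : (1:ℝ) * (A/J) ≤ |((z - X : ℤ) : ℝ)| * (A/J) :=
          mul_le_mul_of_nonneg_right hge hAJ.le
        rw [one_mul] at h5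
        linarith [hεA2J]
      have hzz : z = X := by
        have h6 : ((|z - X| : ℤ) : ℝ) < 1 := by rwa [Int.cast_abs]
        have h7 : |z - X| < 1 := by exact_mod_cast h6
        rcases abs_lt.mp h7 with ⟨ha, hb⟩
        omega
      rw [← hzdef, hzz]
    obtain ⟨c, hcM, hgood⟩ := hNTX X
    have hsubNC : ∀ i : ℕ, i < k + 2 → (c + i * M) ∈ NC := by
      intro i hi
      have h1 : i * M ≤ (k+1) * M := Nat.mul_le_mul_right M (by omega)
      have h2 : M + (k+1)*M = T := by rw [hT]; ring
      have hqlt : c + i * M < T := by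
        have h3 : c + i*M < M + (k+1)*M := Nat.add_lt_add_of_lt_of_le hcM h1
        rw [h2] at h3
        exact h3
      refine Finset.mem_filter.mpr ⟨Finset.mem_range.mpr (Nat.lt_succ_of_lt hqlt), ?_⟩
      intro hP
      have hXeq := hXq (c + i*M) hqlt.le hP
      have husm : u (aa (c + i*M)) ∈ us := by
        rw [hus]
        exact Finset.mem_image_of_mem u (Finset.mem_filter.mpr ⟨haaF _, hP⟩)
      have hdvd : ((u (aa (c+i*M)) : ℕ) : ℤ) ∣ X + ((c + i*M : ℕ) : ℤ) * (J:ℤ) := by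
        refine ⟨(msq (c+i*M) : ℤ), ?_⟩
        push_cast
        push_cast at hXeq
        linarith [hXeq]
      exact hgood (c+i*M) (Nat.add_mul_mod_self_right c i M) (u (aa (c+i*M))) husm hdvd
    have hfin : (Finset.range (k+2)).image (fun i => c + i * M) ⊆ NC := by
      intro q hq
      obtain ⟨i, hi, rfl⟩ := Finset.mem_image.mp hq
      exact hsubNC i (Finset.mem_range.mp hi)
    have hcard : k + 2 ≤ NC.card := by
      have hinj : Function.Injective (fun i => c + i * M) := by
        intro i j hij
        simp only at hij
        have h1 : i * M = j * M := by omega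
        exact Nat.eq_of_mul_eq_mul_right hM0 h1
      have h1 : ((Finset.range (k+2)).image (fun i => c + i * M)).card = k + 2 := by
        rw [Finset.card_image_of_injective _ hinj, Finset.card_range]
      calc k + 2 = _ := h1.symm
        _ ≤ NC.card := Finset.card_le_card hfin
    omega
  · have hsub : Finset.range (T+1) ⊆ NC := by
      intro q hq
      have hqT := Finset.mem_range.mp hq
      refine Finset.mem_filter.mpr ⟨hq, ?_⟩
      exact fun hc => hB ⟨q, by omega, hc⟩
    have : T + 1 ≤ NC.card := by
      calc T + 1 = (Finset.range (T+1)).card := (Finset.card_range _).symm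
        _ ≤ NC.card := Finset.card_le_card hsub
    omega
end
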